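/- arXiv:2511.07248 — 4 statements merged into one kernel-verified Lean document; each statement's English description precedes it below -/
import Mathlib

section
/- If A ⊆ V(G) maximizes the sum of the numbers of internal and self private neighbors (an ISPN(G)-set), then there is a subset B ⊆ A which is also an ISPN(G)-set and is 1-dependent, i.e., the induced subgraph G[B] has maximum degree at most 1. -/
open Finset

variable {V : Type*}

/-- Number of external private neighbors with respect to `U`. -/
noncomputable def extCount (G : SimpleGraph V) (U : Finset V) : ℕ :=
  Nat.card {w : V // w ∉ U ∧ Nat.card {v : V // v ∈ U ∧ G.Adj w v} = 1}

/-- Number of internal private neighbors with respect to `U`. -/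
noncomputable def intCount (G : SimpleGraph V) (U : Finset V) : ℕ :=
  Nat.card {w : V // w ∈ U ∧ Nat.card {v : V // v ∈ U ∧ G.Adj w v} = 1}

/-- Number of self private neighbors with respect to `U`. -/
noncomputable def selfCount (G : SimpleGraph V) (U : Finset V) : ℕ :=
  Nat.card {w : V // w ∈ U ∧ ∀ v ∈ U, ¬ G.Adj w v}

/-- `ISPN G`: maximum combined number of internal and self private neighbors. -/
noncomputable def ISPN [Fintype V] [DecidableEq V] (G : SimpleGraph V) : ℕ :=
  (univ : Finset (Finset V)).sup fun U => intCount G U + selfCount G U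

section Aux
variable [Fintype V] [DecidableEq V] (G : SimpleGraph V)

open Classical in
lemma natCard_adj_eq (U : Finset V) (w : V) :
    Nat.card {v : V // v ∈ U ∧ G.Adj w v} = (U.filter (fun v => G.Adj w v)).card := by
  rw [Nat.card_eq_fintype_card, Fintype.card_subtype]
  congr 1
  ext v
  simp [Finset.mem_filter]

open Classical in
lemma sum_counts_eq (U : Finset V) :
    intCount G U + selfCount G U
      = (U.filter (fun w => (U.filter (fun v => G.Adj w v)).card ≤ 1)).card := by
  unfold intCount selfCount
  simp only [natCard_adj_eq G]
  rw [Nat.card_eq_fintype_card, Fintype.card_subtype,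
      Nat.card_eq_fintype_card, Fintype.card_subtype]
  have h1 : (Finset.univ.filter fun w => w ∈ U ∧ (U.filter (fun v => G.Adj w v)).card = 1)
      = U.filter (fun w => (U.filter (fun v => G.Adj w v)).card = 1) := by
    ext w; simp [Finset.mem_filter]
  have h0 : (Finset.univ.filter fun w => w ∈ U ∧ ∀ v ∈ U, ¬ G.Adj w v)
      = U.filter (fun w => (U.filter (fun v => G.Adj w v)).card = 0) := by
    ext w
    simp only [Finset.mem_filter, Finset.mem_univ, true_and, Finset.card_eq_zero,
      Finset.filter_eq_empty_iff]
  rw [h1, h0, ← Finset.card_union_of_disjoint, ← Finset.filter_or]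
  · congr 1
    ext w
    simp only [Finset.mem_filter]
    constructor
    · rintro ⟨hw, h | h⟩ <;> exact ⟨hw, by omega⟩
    · rintro ⟨hw, h⟩
      exact ⟨hw, by omega⟩
  · rw [Finset.disjoint_filter]
    intro w _ h1 h0
    omega

end Aux

theorem exists_oneDependent_ISPN_set [Fintype V] [DecidableEq V] (G : SimpleGraph V)
    (A : Finset V) (hA : intCount G A + selfCount G A = ISPN G) :
    ∃ B ⊆ A, intCount G B + selfCount G B = ISPN G ∧
      ∀ v ∈ B, ∀ u ∈ B, ∀ u' ∈ B, G.Adj v u → G.Adj v u' → u = u' := by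
  classical
  set B : Finset V := A.filter (fun w => (A.filter (fun v => G.Adj w v)).card ≤ 1) with hB
  refine ⟨B, Finset.filter_subset _ _, ?_, ?_⟩
  · have hle : intCount G B + selfCount G B ≤ ISPN G := by
      unfold ISPN
      exact Finset.le_sup (f := fun U => intCount G U + selfCount G U) (Finset.mem_univ B)
    have hge : intCount G A + selfCount G A ≤ intCount G B + selfCount G B := by
      rw [sum_counts_eq, sum_counts_eq]
      apply Finset.card_le_card
      intro w hw
      simp only [Finset.mem_filter] at hw ⊢
      have hwB : w ∈ B := by
        rw [hB, Finset.mem_filter]; exact ⟨hw.1, hw.2⟩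
      refine ⟨hwB, ?_⟩
      calc (B.filter (fun v => G.Adj w v)).card
          ≤ (A.filter (fun v => G.Adj w v)).card :=
            Finset.card_le_card
              (Finset.filter_subset_filter _ (Finset.filter_subset _ _))
        _ ≤ 1 := hw.2
    omega
  · intro v hv u hu u' hu' h h'
    rw [hB, Finset.mem_filter] at hv
    have hu1 : u ∈ A.filter (fun x => G.Adj v x) :=
      Finset.mem_filter.mpr ⟨Finset.filter_subset _ _ hu, h⟩
    have hu2 : u' ∈ A.filter (fun x => G.Adj v x) :=
      Finset.mem_filter.mpr ⟨Finset.filter_subset _ _ hu', h'⟩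
    exact Finset.card_le_one.mp hv.2 u hu1 u' hu2
end

section
/- For the path P_n on n ≥ 2 vertices, the maximum over subsets U of the combined number of external and self private neighbors equals n; i.e., ESPN(P_n) = n. -/
open Finset

variable {V : Type*}

/-- `ESPN G`: maximum combined number of external and self private neighbors. -/
noncomputable def ESPN [Fintype V] [DecidableEq V] (G : SimpleGraph V) : ℕ :=
  (univ : Finset (Finset V)).sup fun U => extCount G U + selfCount G U

/-- The path graph on vertices `{0, …, n-1}` with edges between consecutive numbers. -/
def myPath (n : ℕ) : SimpleGraph (Fin n) :=
  SimpleGraph.fromRel (fun i j => (i : ℕ) + 1 = (j : ℕ))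

open Classical in
lemma espn_sum_eq [Finite V] (G : SimpleGraph V) (U : Finset V) :
    extCount G U + selfCount G U =
    Nat.card {w : V // (w ∉ U ∧ Nat.card {v : V // v ∈ U ∧ G.Adj w v} = 1)
      ∨ (w ∈ U ∧ ∀ v ∈ U, ¬ G.Adj w v)} := by
  rw [extCount, selfCount, ← Nat.card_sum]
  refine Nat.card_congr (subtypeOrEquiv _ _ ?_).symm
  intro p hp hq w hw
  exact absurd ((hq w hw).1) (fun h => ((hp w hw).1) h)

lemma myPath_adj {n : ℕ} (a b : Fin n) :
    (myPath n).Adj a b ↔ ((a : ℕ) + 1 = (b : ℕ) ∨ (b : ℕ) + 1 = (a : ℕ)) := by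
  rw [myPath, SimpleGraph.fromRel_adj, Fin.ne_iff_vne]
  omega

theorem ESPN_path (n : ℕ) (hn : 2 ≤ n) : ESPN (myPath n) = n := by
  classical
  apply le_antisymm
  · apply Finset.sup_le
    intro U _
    rw [espn_sum_eq]
    calc Nat.card _ ≤ Nat.card (Fin n) :=
          Nat.card_le_card_of_injective _ Subtype.val_injective
      _ = n := by simp
  · set r : ℕ := if n % 3 = 1 then 0 else 1 with hrdef
    have hr : (n % 3 = 1 ∧ r = 0) ∨ (n % 3 ≠ 1 ∧ r = 1) := by
      by_cases h : n % 3 = 1 <;> simp [hrdef, h]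
    set U : Finset (Fin n) := univ.filter (fun i => (i : ℕ) % 3 = r) with hUdef
    have hUmem : ∀ v : Fin n, v ∈ U ↔ (v : ℕ) % 3 = r := by
      intro v; simp [hUdef]
    have key : ∀ w : Fin n,
        (w ∉ U ∧ Nat.card {v : Fin n // v ∈ U ∧ (myPath n).Adj w v} = 1)
        ∨ (w ∈ U ∧ ∀ v ∈ U, ¬ (myPath n).Adj w v) := by
      intro w
      by_cases hw : (w : ℕ) % 3 = r
      · right
        refine ⟨(hUmem w).mpr hw, fun v hv hadj => ?_⟩
        have hv' := (hUmem v).mp hv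
        rw [myPath_adj] at hadj
        omega
      · left
        refine ⟨fun h => hw ((hUmem w).mp h), ?_⟩
        rw [Nat.card_eq_one_iff_exists]
        -- the unique private neighbor
        have hwlt : (w : ℕ) < n := w.isLt
        by_cases hcase : ((w : ℕ) + 1) % 3 = r
        · -- neighbor is w + 1; need w + 1 < n
          have hlt : (w : ℕ) + 1 < n := by omega
          refine ⟨⟨⟨(w : ℕ) + 1, hlt⟩, ?_, ?_⟩, ?_⟩
          · rw [hUmem]; exact hcase
          · rw [myPath_adj]; left; simp
          · rintro ⟨v, hv, hadj⟩
            have hv' := (hUmem v).mp hv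
            rw [myPath_adj] at hadj
            apply Subtype.ext
            apply Fin.ext
            simp only
            omega
        · -- neighbor is w - 1
          have hge : 1 ≤ (w : ℕ) := by omega
          refine ⟨⟨⟨(w : ℕ) - 1, by omega⟩, ?_, ?_⟩, ?_⟩
          · rw [hUmem]; simp only; omega
          · rw [myPath_adj]; right; simp only; omega
          · rintro ⟨v, hv, hadj⟩
            have hv' := (hUmem v).mp hv
            rw [myPath_adj] at hadj
            apply Subtype.ext
            apply Fin.ext
            simp only
            omega
    calc n = Nat.card (Fin n) := by simp
      _ = Nat.card {w : Fin n //
            (w ∉ U ∧ Nat.card {v : Fin n // v ∈ U ∧ (myPath n).Adj w v} = 1)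
            ∨ (w ∈ U ∧ ∀ v ∈ U, ¬ (myPath n).Adj w v)} :=
          (Nat.card_congr (Equiv.subtypeUnivEquiv key)).symm
      _ = extCount (myPath n) U + selfCount (myPath n) U := (espn_sum_eq _ _).symm
      _ ≤ ESPN (myPath n) := by
          rw [ESPN]
          exact Finset.le_sup (f := fun U => extCount (myPath n) U + selfCount (myPath n) U)
            (Finset.mem_univ U)
end

section
/- For the cycle C_n on n ≥ 3 vertices, IPN(C_n) = 2⌊n/3⌋ and EPN(C_n) = 2⌊n/3⌋. -/
open Finset

variable {V : Type*}

/-- `IPN G`: maximum number of internal private neighbors over all vertex subsets. -/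
noncomputable def IPN [Fintype V] [DecidableEq V] (G : SimpleGraph V) : ℕ :=
  (univ : Finset (Finset V)).sup fun U => intCount G U

/-- `EPN G`: maximum number of external private neighbors over all vertex subsets. -/
noncomputable def EPN [Fintype V] [DecidableEq V] (G : SimpleGraph V) : ℕ :=
  (univ : Finset (Finset V)).sup fun U => extCount G U

/-- The cycle graph on `ZMod n`, with edges between consecutive residues. -/
def myCycle (n : ℕ) : SimpleGraph (ZMod n) :=
  SimpleGraph.fromRel (fun i j => i + 1 = j)


set_option linter.unusedSectionVars false

section basics
variable {n : ℕ} [NeZero n]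

lemma one_ne (hn : 3 ≤ n) : (1 : ZMod n) ≠ 0 := by
  haveI : Fact (1 < n) := ⟨by omega⟩
  exact one_ne_zero

lemma two_ne (hn : 3 ≤ n) : (2 : ZMod n) ≠ 0 := by
  intro h
  have h2 : ((2:ℕ) : ZMod n) = 0 := by push_cast; exact h
  rw [ZMod.natCast_eq_zero_iff] at h2
  have := Nat.le_of_dvd two_pos h2
  omega

lemma adj_iff (hn : 3 ≤ n) (w v : ZMod n) :
    (myCycle n).Adj w v ↔ (v = w + 1 ∨ v = w - 1) := by
  constructor
  · rintro ⟨hne, h | h⟩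
    · exact Or.inl h.symm
    · right; rw [← h]; ring
  · rintro (rfl | rfl)
    · exact ⟨(left_ne_add.mpr (one_ne hn)), Or.inl rfl⟩
    · refine ⟨fun h => ?_, Or.inr (by ring)⟩
      exact one_ne hn (by linear_combination h)

lemma natcard_filter (p : ZMod n → Prop) [DecidablePred p] :
    Nat.card {w : ZMod n // p w} = (univ.filter p).card := by
  rw [Nat.card_eq_fintype_card, Fintype.card_subtype]

lemma nbr_one (hn : 3 ≤ n) (U : Finset (ZMod n)) (w : ZMod n) :
    Nat.card {v : ZMod n // v ∈ U ∧ (myCycle n).Adj w v} = 1 ↔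
      ((w + 1 ∈ U ∧ w - 1 ∉ U) ∨ (w - 1 ∈ U ∧ w + 1 ∉ U)) := by
  classical
  rw [natcard_filter]
  have hne : w + 1 ≠ w - 1 := fun h => two_ne hn (by linear_combination h)
  have hset : (univ.filter fun v => v ∈ U ∧ (myCycle n).Adj w v)
      = ({w + 1, w - 1} : Finset (ZMod n)).filter (· ∈ U) := by
    ext v
    simp only [mem_filter, mem_univ, true_and, adj_iff hn, mem_insert, mem_singleton]
    tauto
  rw [hset]
  by_cases h1 : w + 1 ∈ U <;> by_cases h2 : w - 1 ∈ U <;>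
    simp [filter_insert, filter_singleton, h1, h2, hne, Finset.card_insert_of_notMem]

lemma intCount_eq (hn : 3 ≤ n) (U : Finset (ZMod n)) :
    intCount (myCycle n) U =
      (univ.filter fun w : ZMod n => w ∈ U ∧
        ((w + 1 ∈ U ∧ w - 1 ∉ U) ∨ (w - 1 ∈ U ∧ w + 1 ∉ U))).card := by
  classical
  rw [intCount, natcard_filter]
  congr 1
  apply filter_congr
  intro w _
  rw [nbr_one hn]

lemma extCount_eq (hn : 3 ≤ n) (U : Finset (ZMod n)) :
    extCount (myCycle n) U =
      (univ.filter fun w : ZMod n => w ∉ U ∧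
        ((w + 1 ∈ U ∧ w - 1 ∉ U) ∨ (w - 1 ∈ U ∧ w + 1 ∉ U))).card := by
  classical
  rw [extCount, natcard_filter]
  congr 1
  apply filter_congr
  intro w _
  rw [nbr_one hn]
end basics

section upper
variable {n : ℕ} [NeZero n]

lemma shift_card (p : ZMod n → Prop) [DecidablePred p] (c : ZMod n) :
    (univ.filter fun w => p (w + c)).card = (univ.filter p).card := by
  apply Finset.card_bij' (fun w _ => w + c) (fun w _ => w - c) <;>
    intros a ha <;> simp_all

lemma asc_desc (U : Finset (ZMod n)) :
    (univ.filter fun w : ZMod n => w ∈ U ∧ w + 1 ∉ U).card =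
    (univ.filter fun w : ZMod n => w ∉ U ∧ w + 1 ∈ U).card := by
  classical
  have s3 : (univ.filter fun w : ZMod n => w + 1 ∈ U).card =
      (univ.filter fun w : ZMod n => w ∈ U).card := shift_card (· ∈ U) 1
  have s1 : (univ.filter fun w : ZMod n => w ∈ U ∧ w + 1 ∉ U).card
      + (univ.filter fun w : ZMod n => w ∈ U ∧ w + 1 ∈ U).card
      = (univ.filter fun w : ZMod n => w ∈ U).card := by
    rw [← card_union_of_disjoint (by rw [Finset.disjoint_left]; intro a ha hb; simp_all)]
    congr 1
    ext w; simp; tauto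
  have s2 : (univ.filter fun w : ZMod n => w ∉ U ∧ w + 1 ∈ U).card
      + (univ.filter fun w : ZMod n => w ∈ U ∧ w + 1 ∈ U).card
      = (univ.filter fun w : ZMod n => w + 1 ∈ U).card := by
    rw [← card_union_of_disjoint (by rw [Finset.disjoint_left]; intro a ha hb; simp_all)]
    congr 1
    ext w; simp; tauto
  omega

lemma LR_card (U : Finset (ZMod n)) (m : ZMod n → Prop) [DecidablePred m]
    (h : (univ.filter fun w : ZMod n => m w ∧ w + 1 ∈ U).card
       = (univ.filter fun w : ZMod n => w ∈ U ∧ m (w + 1)).card) :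
    (univ.filter fun w : ZMod n => w - 1 ∉ U ∧ m w ∧ w + 1 ∈ U).card =
    (univ.filter fun w : ZMod n => w - 1 ∈ U ∧ m w ∧ w + 1 ∉ U).card := by
  classical
  have hA : (univ.filter fun w : ZMod n => w - 1 ∉ U ∧ m w ∧ w + 1 ∈ U).card
      + (univ.filter fun w : ZMod n => w - 1 ∈ U ∧ m w ∧ w + 1 ∈ U).card
      = (univ.filter fun w : ZMod n => m w ∧ w + 1 ∈ U).card := by
    rw [← card_union_of_disjoint (by rw [Finset.disjoint_left]; intro a ha hb; simp_all)]
    congr 1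
    ext w; simp; tauto
  have hB : (univ.filter fun w : ZMod n => w - 1 ∈ U ∧ m w ∧ w + 1 ∉ U).card
      + (univ.filter fun w : ZMod n => w - 1 ∈ U ∧ m w ∧ w + 1 ∈ U).card
      = (univ.filter fun w : ZMod n => w - 1 ∈ U ∧ m w).card := by
    rw [← card_union_of_disjoint (by rw [Finset.disjoint_left]; intro a ha hb; simp_all)]
    congr 1
    ext w; simp; tauto
  have hAB : (univ.filter fun w : ZMod n => w - 1 ∈ U ∧ m w).card
      = (univ.filter fun w : ZMod n => w ∈ U ∧ m (w + 1)).card := by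
    rw [← shift_card (fun w : ZMod n => w ∈ U ∧ m (w + 1)) (-1)]
    have e1 : ∀ w : ZMod n, w + -1 + 1 = w := fun w => by ring
    have e2 : ∀ w : ZMod n, w + -1 = w - 1 := fun w => by ring
    have e3 : ∀ w : ZMod n, w - 1 + 1 = w := fun w => by ring
    simp only [e1, e2, e3]
  omega
end upper
section upper2
variable {n : ℕ} [NeZero n]

lemma three_mul_le (U : Finset (ZMod n)) (m : ZMod n → Prop) [DecidablePred m]
    (hm : (∀ w, m w ↔ w ∈ U) ∨ (∀ w, m w ↔ w ∉ U)) :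
    3 * (univ.filter fun w : ZMod n => w - 1 ∉ U ∧ m w ∧ w + 1 ∈ U).card ≤ n := by
  classical
  set L := univ.filter fun w : ZMod n => w - 1 ∉ U ∧ m w ∧ w + 1 ∈ U with hL
  have hmemL : ∀ x : ZMod n, x ∈ L ↔ (x - 1 ∉ U ∧ m x ∧ x + 1 ∈ U) := by
    intro x; simp [hL]
  have hinj1 : (L.image (· + 1)).card = L.card :=
    card_image_of_injective _ (add_left_injective 1)
  have hinj2 : (L.image (· + (-1))).card = L.card :=
    card_image_of_injective _ (add_left_injective (-1))
  have d1 : Disjoint L (L.image (· + 1)) := by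
    rw [Finset.disjoint_left]
    intro x hx hy
    rw [mem_image] at hy
    obtain ⟨a, ha, rfl⟩ := hy
    rw [hmemL] at hx ha
    have h1 : a + 1 - 1 = a := by ring
    rw [h1] at hx
    rcases hm with hm | hm
    · exact hx.1 ((hm a).mp ha.2.1)
    · exact ((hm (a + 1)).mp hx.2.1) ha.2.2
  have d2 : Disjoint L (L.image (· + (-1))) := by
    rw [Finset.disjoint_left]
    intro x hx hy
    rw [mem_image] at hy
    obtain ⟨a, ha, rfl⟩ := hy
    rw [hmemL] at hx ha
    have h2 : a + -1 + 1 = a := by ring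
    have h3 : a + -1 = a - 1 := by ring
    rw [h2, h3] at hx
    rcases hm with hm | hm
    · exact ha.1 ((hm (a - 1)).mp hx.2.1)
    · exact ((hm a).mp ha.2.1) hx.2.2
  have d3 : Disjoint (L.image (· + 1)) (L.image (· + (-1))) := by
    rw [Finset.disjoint_left]
    intro x hx hy
    rw [mem_image] at hx hy
    obtain ⟨a, ha, rfl⟩ := hx
    obtain ⟨b, hb, hbe⟩ := hy
    rw [hmemL] at ha hb
    have h4 : b - 1 = a + 1 := by linear_combination hbe
    rw [h4] at hb
    exact hb.1 ha.2.2
  have hcard : (L ∪ L.image (· + 1) ∪ L.image (· + (-1))).card = 3 * L.card := by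
    rw [card_union_of_disjoint (by rw [disjoint_union_left]; exact ⟨d2, d3⟩),
      card_union_of_disjoint d1, hinj1, hinj2]
    ring
  calc 3 * L.card = (L ∪ L.image (· + 1) ∪ L.image (· + (-1))).card := hcard.symm
    _ ≤ (univ : Finset (ZMod n)).card := card_le_univ _
    _ = n := by rw [card_univ, ZMod.card]

lemma count_upper (U : Finset (ZMod n)) (m : ZMod n → Prop) [DecidablePred m]
    (hm : (∀ w, m w ↔ w ∈ U) ∨ (∀ w, m w ↔ w ∉ U)) :
    (univ.filter fun w : ZMod n => m w ∧
      ((w + 1 ∈ U ∧ w - 1 ∉ U) ∨ (w - 1 ∈ U ∧ w + 1 ∉ U))).card ≤ 2 * (n / 3) := by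
  classical
  have hLR : (univ.filter fun w : ZMod n => w - 1 ∉ U ∧ m w ∧ w + 1 ∈ U).card =
      (univ.filter fun w : ZMod n => w - 1 ∈ U ∧ m w ∧ w + 1 ∉ U).card := by
    apply LR_card
    rcases hm with hm | hm
    · congr 1
      ext w
      simp [hm]
    · calc (univ.filter fun w : ZMod n => m w ∧ w + 1 ∈ U).card
          = (univ.filter fun w : ZMod n => w ∉ U ∧ w + 1 ∈ U).card := by
            congr 1; ext w; simp only [mem_filter, hm]
        _ = (univ.filter fun w : ZMod n => w ∈ U ∧ w + 1 ∉ U).card := (asc_desc U).symm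
        _ = (univ.filter fun w : ZMod n => w ∈ U ∧ m (w + 1)).card := by
            congr 1; ext w; simp only [mem_filter, hm]
  have hsplit : (univ.filter fun w : ZMod n => m w ∧
      ((w + 1 ∈ U ∧ w - 1 ∉ U) ∨ (w - 1 ∈ U ∧ w + 1 ∉ U))).card =
      (univ.filter fun w : ZMod n => w - 1 ∉ U ∧ m w ∧ w + 1 ∈ U).card +
      (univ.filter fun w : ZMod n => w - 1 ∈ U ∧ m w ∧ w + 1 ∉ U).card := by
    rw [← card_union_of_disjoint (by rw [Finset.disjoint_left]; intro a ha hb; simp_all)]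
    congr 1
    ext w; simp; tauto
  have h3 := three_mul_le U m hm
  have hdiv : (univ.filter fun w : ZMod n => w - 1 ∉ U ∧ m w ∧ w + 1 ∈ U).card ≤ n / 3 := by
    rw [Nat.le_div_iff_mul_le (by norm_num)]
    omega
  omega
end upper2
section lower
variable {n : ℕ} [NeZero n]

lemma castinj (a b : ℕ) (ha : a < n) (hb : b < n) (h : ((a : ℕ) : ZMod n) = b) :
    a = b := by
  have := congrArg ZMod.val h
  rwa [ZMod.val_cast_of_lt ha, ZMod.val_cast_of_lt hb] at this

lemma cast_sub_one (a : ℕ) (ha : 1 ≤ a) :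
    ((a : ℕ) : ZMod n) - 1 = ((a - 1 : ℕ) : ZMod n) := by
  rw [Nat.cast_sub ha]; push_cast; ring

lemma cast_add_one (a : ℕ) :
    ((a : ℕ) : ZMod n) + 1 = ((a + 1 : ℕ) : ZMod n) := by push_cast; ring

lemma zero_sub_one (hn : 3 ≤ n) : ((0 : ℕ) : ZMod n) - 1 = ((n - 1 : ℕ) : ZMod n) := by
  rw [Nat.cast_sub (by omega), ZMod.natCast_self]; push_cast; ring

lemma int_lower (hn : 3 ≤ n) :
    ∃ U : Finset (ZMod n), 2 * (n / 3) ≤ (univ.filter fun w : ZMod n => w ∈ U ∧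
      ((w + 1 ∈ U ∧ w - 1 ∉ U) ∨ (w - 1 ∈ U ∧ w + 1 ∉ U))).card := by
  classical
  set k := n / 3 with hk
  have h3k : 3 * k ≤ n := by have := Nat.div_mul_le_self n 3; omega
  have hk1 : 1 ≤ k := by omega
  set U : Finset (ZMod n) :=
    (range (2 * k)).image (fun j => ((3 * (j / 2) + j % 2 : ℕ) : ZMod n)) with hU
  have memU : ∀ x : ZMod n,
      x ∈ U ↔ ∃ j, j < 2 * k ∧ ((3 * (j / 2) + j % 2 : ℕ) : ZMod n) = x := by
    intro x; simp [hU, mem_image, mem_range]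
  have hglt : ∀ j, j < 2 * k → 3 * (j / 2) + j % 2 < n := by intro j h; omega
  have hmem : ∀ j, j < 2 * k → ((3 * (j / 2) + j % 2 : ℕ) : ZMod n) ∈ U :=
    fun j hj => (memU _).mpr ⟨j, hj, rfl⟩
  have hnotmem : ∀ a, a < n → (a % 3 = 2 ∨ n - 2 < a) → ((a : ℕ) : ZMod n) ∉ U := by
    intro a ha hcond hmem'
    rw [memU] at hmem'
    obtain ⟨j, hj, hc⟩ := hmem'
    have := castinj _ _ (hglt j hj) ha hc
    omega
  refine ⟨U, ?_⟩
  have hsub : U ⊆ univ.filter fun w : ZMod n => w ∈ U ∧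
      ((w + 1 ∈ U ∧ w - 1 ∉ U) ∨ (w - 1 ∈ U ∧ w + 1 ∉ U)) := by
    intro x hx
    have hx' := hx
    rw [memU] at hx'
    obtain ⟨j, hj, rfl⟩ := hx'
    simp only [mem_filter, mem_univ, true_and]
    refine ⟨hx, ?_⟩
    have h2 : j % 2 = 0 ∨ j % 2 = 1 := by omega
    rcases h2 with h2 | h2
    · left
      constructor
      · rw [cast_add_one]
        have h := hmem (j + 1) (by omega)
        have he : 3 * ((j + 1) / 2) + (j + 1) % 2 = 3 * (j / 2) + j % 2 + 1 := by omega
        rwa [he] at h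
      · by_cases hj0 : j = 0
        · subst hj0
          simp only [h2]
          have he : (3 * (0 / 2) + 0 % 2 : ℕ) = 0 := by norm_num
          rw [he, zero_sub_one hn]
          exact hnotmem (n - 1) (by omega) (by omega)
        · rw [cast_sub_one _ (by omega)]
          exact hnotmem _ (by omega) (by omega)
    · right
      constructor
      · rw [cast_sub_one _ (by omega)]
        have h := hmem (j - 1) (by omega)
        have he : 3 * ((j - 1) / 2) + (j - 1) % 2 = 3 * (j / 2) + j % 2 - 1 := by omega
        rwa [he] at h
      · rw [cast_add_one]
        exact hnotmem _ (by omega) (by omega)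
  have hcard : U.card = 2 * k := by
    rw [hU, card_image_of_injOn, card_range]
    intro j1 h1 j2 h2 hc
    rw [mem_coe, mem_range] at h1 h2
    have := castinj _ _ (hglt j1 h1) (hglt j2 h2) hc
    omega
  calc 2 * k = U.card := hcard.symm
    _ ≤ _ := card_le_card hsub

lemma ext_lower (hn : 3 ≤ n) :
    ∃ U : Finset (ZMod n), 2 * (n / 3) ≤ (univ.filter fun w : ZMod n => w ∉ U ∧
      ((w + 1 ∈ U ∧ w - 1 ∉ U) ∨ (w - 1 ∈ U ∧ w + 1 ∉ U))).card := by
  classical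
  set k := n / 3 with hk
  have h3k : 3 * k ≤ n := by have := Nat.div_mul_le_self n 3; omega
  have hk1 : 1 ≤ k := by omega
  set U : Finset (ZMod n) := (range k).image (fun i => ((3 * i + 1 : ℕ) : ZMod n)) with hU
  have memU : ∀ x : ZMod n, x ∈ U ↔ ∃ i, i < k ∧ ((3 * i + 1 : ℕ) : ZMod n) = x := by
    intro x; simp [hU, mem_image, mem_range]
  have hmemU : ∀ i, i < k → ((3 * i + 1 : ℕ) : ZMod n) ∈ U :=
    fun i hi => (memU _).mpr ⟨i, hi, rfl⟩
  have hnotmemU : ∀ a, a < n → (a % 3 ≠ 1 ∨ n - 2 < a) → ((a : ℕ) : ZMod n) ∉ U := by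
    intro a ha hcond hmem'
    rw [memU] at hmem'
    obtain ⟨i, hi, hc⟩ := hmem'
    have := castinj _ _ (by omega) ha hc
    omega
  set W : Finset (ZMod n) :=
    (range (2 * k)).image (fun j => ((3 * (j / 2) + 2 * (j % 2) : ℕ) : ZMod n)) with hW
  have hglt : ∀ j, j < 2 * k → 3 * (j / 2) + 2 * (j % 2) < n := by intro j h; omega
  refine ⟨U, ?_⟩
  have hsub : W ⊆ univ.filter fun w : ZMod n => w ∉ U ∧
      ((w + 1 ∈ U ∧ w - 1 ∉ U) ∨ (w - 1 ∈ U ∧ w + 1 ∉ U)) := by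
    intro x hx
    rw [hW, mem_image] at hx
    obtain ⟨j, hj, rfl⟩ := hx
    rw [mem_range] at hj
    simp only [mem_filter, mem_univ, true_and]
    have h2 : j % 2 = 0 ∨ j % 2 = 1 := by omega
    rcases h2 with h2 | h2
    · refine ⟨hnotmemU _ (hglt j hj) (by omega), ?_⟩
      left
      constructor
      · rw [cast_add_one]
        have h := hmemU (j / 2) (by omega)
        have he : 3 * (j / 2) + 1 = 3 * (j / 2) + 2 * (j % 2) + 1 := by omega
        rwa [he] at h
      · by_cases hj0 : j = 0
        · subst hj0
          simp only [h2]
          have he : (3 * (0 / 2) + 2 * (0 % 2) : ℕ) = 0 := by norm_num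
          rw [he, zero_sub_one hn]
          exact hnotmemU (n - 1) (by omega) (by omega)
        · rw [cast_sub_one _ (by omega)]
          exact hnotmemU _ (by omega) (by omega)
    · refine ⟨hnotmemU _ (hglt j hj) (by omega), ?_⟩
      right
      constructor
      · rw [cast_sub_one _ (by omega)]
        have h := hmemU (j / 2) (by omega)
        have he : 3 * (j / 2) + 1 = 3 * (j / 2) + 2 * (j % 2) - 1 := by omega
        rwa [he] at h
      · rw [cast_add_one]
        by_cases hlast : 3 * (j / 2) + 2 * (j % 2) + 1 = n
        · rw [hlast, ZMod.natCast_self]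
          have h0 : ((0 : ℕ) : ZMod n) ∉ U := hnotmemU 0 (by omega) (by omega)
          simpa using h0
        · exact hnotmemU _ (by omega) (by omega)
  have hcard : W.card = 2 * k := by
    rw [hW, card_image_of_injOn, card_range]
    intro j1 h1 j2 h2 hc
    rw [mem_coe, mem_range] at h1 h2
    have := castinj _ _ (hglt j1 h1) (hglt j2 h2) hc
    omega
  calc 2 * k = W.card := hcard.symm
    _ ≤ _ := card_le_card hsub
end lower

theorem IPN_EPN_cycle (n : ℕ) [NeZero n] (hn : 3 ≤ n) :
    IPN (myCycle n) = 2 * (n / 3) ∧ EPN (myCycle n) = 2 * (n / 3) := by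
  classical
  constructor
  · apply le_antisymm
    · apply Finset.sup_le
      intro U _
      rw [intCount_eq hn]
      exact count_upper U (fun w => w ∈ U) (Or.inl fun _ => Iff.rfl)
    · obtain ⟨U, hU⟩ := int_lower (n := n) hn
      calc 2 * (n / 3) ≤ _ := hU
        _ = intCount (myCycle n) U := (intCount_eq hn U).symm
        _ ≤ IPN (myCycle n) := Finset.le_sup (mem_univ U)
  · apply le_antisymm
    · apply Finset.sup_le
      intro U _
      rw [extCount_eq hn]
      exact count_upper U (fun w => w ∉ U) (Or.inr fun _ => Iff.rfl)
    · obtain ⟨U, hU⟩ := ext_lower (n := n) hn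
      calc 2 * (n / 3) ≤ _ := hU
        _ = extCount (myCycle n) U := (extCount_eq hn U).symm
        _ ≤ EPN (myCycle n) := Finset.le_sup (mem_univ U)
end

section
/- For even m, the corona T_m = P_m ∘ K_1 (obtained from a path on m vertices by attaching one pendant leaf to each path vertex) satisfies IPN(T_m) = m, which is half the order of T_m. -/
open Finset

variable {V : Type*}

/-- The corona `P_m ∘ K_1`: path vertices `Sum.inl i`, each with a pendant leaf `Sum.inr i`. -/
def corona (m : ℕ) : SimpleGraph (Fin m ⊕ Fin m) :=
  SimpleGraph.fromRel (fun a b =>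
    match a, b with
    | Sum.inl i, Sum.inl j => (i : ℕ) + 1 = (j : ℕ)
    | Sum.inl i, Sum.inr j => i = j
    | _, _ => False)

section CoronaProof

open Sum

variable {m : ℕ}

lemma corona_adj_inr (i : Fin m) (v : Fin m ⊕ Fin m) :
    (corona m).Adj (inr i) v ↔ v = inl i := by
  cases v with
  | inl j => simp [corona, SimpleGraph.fromRel_adj, eq_comm]
  | inr j => simp [corona, SimpleGraph.fromRel_adj]

lemma corona_adj_inl_inr (i j : Fin m) :
    (corona m).Adj (inl i) (inr j) ↔ i = j := by
  simp [corona, SimpleGraph.fromRel_adj, eq_comm]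

lemma corona_adj_inl_inl (i j : Fin m) :
    (corona m).Adj (inl i) (inl j) ↔ ((i:ℕ)+1 = (j:ℕ) ∨ (j:ℕ)+1 = (i:ℕ)) := by
  simp only [corona, SimpleGraph.fromRel_adj, ne_eq, Sum.inl.injEq]
  constructor
  · rintro ⟨-, h⟩; exact h
  · intro h
    refine ⟨fun hij => ?_, h⟩
    subst hij; omega

lemma natCard_subtype {α : Type*} [Fintype α] (p : α → Prop) [DecidablePred p] :
    Nat.card {x // p x} = (univ.filter p).card := by
  rw [Nat.card_eq_fintype_card, Fintype.card_subtype]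

lemma intCount_corona_le (hme : Even m) (U : Finset (Fin m ⊕ Fin m)) :
    intCount (corona m) U ≤ m := by
  classical
  set P : (Fin m ⊕ Fin m) → Prop :=
    fun w => w ∈ U ∧ Nat.card {v : Fin m ⊕ Fin m // v ∈ U ∧ (corona m).Adj w v} = 1 with hP
  have hcount : intCount (corona m) U = (univ.filter P).card := by
    rw [intCount, natCard_subtype]
  -- F1a : P (inr i) → inl i ∈ U
  have hF1a : ∀ i : Fin m, P (inr i) → inl i ∈ U := by
    intro i hi
    have hne : Nat.card {v : Fin m ⊕ Fin m // v ∈ U ∧ (corona m).Adj (inr i) v} ≠ 0 := by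
      rw [hi.2]; exact one_ne_zero
    obtain ⟨⟨v, hvU, hadj⟩⟩ := (Nat.card_ne_zero.mp hne).1
    rw [corona_adj_inr] at hadj
    subst hadj; exact hvU
  -- F2 / block
  have hblock : ∀ i j : Fin m, P (inl i) → P (inr i) →
      ((i:ℕ)+1 = (j:ℕ) ∨ (j:ℕ)+1 = (i:ℕ)) → inl j ∉ U := by
    intro i j hpl hpr hij hjU
    have hsub : Subsingleton {v : Fin m ⊕ Fin m // v ∈ U ∧ (corona m).Adj (inl i) v} :=
      (Nat.card_eq_one_iff_unique.mp hpl.2).1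
    have h1 : (⟨inr i, hpr.1, (corona_adj_inl_inr i i).mpr rfl⟩ :
        {v : Fin m ⊕ Fin m // v ∈ U ∧ (corona m).Adj (inl i) v}) =
        ⟨inl j, hjU, (corona_adj_inl_inl i j).mpr hij⟩ := Subsingleton.elim _ _
    simp at h1
  -- the injection
  rw [hcount]
  have hkey : (univ.filter P).card ≤ (Finset.range m).card := ?_
  · simpa using hkey
  set ψ : (Fin m ⊕ Fin m) → ℕ := fun w =>
    match w with
    | inr i => (i : ℕ)
    | inl i => if P (inr i) then (if (i:ℕ) % 2 = 0 then (i:ℕ)+1 else (i:ℕ)-1) else (i:ℕ)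
    with hψ
  have hl : ∀ i : Fin m, ψ (inl i) =
      if P (inr i) then (if (i:ℕ) % 2 = 0 then (i:ℕ)+1 else (i:ℕ)-1) else (i:ℕ) :=
    fun _ => rfl
  have hr : ∀ i : Fin m, ψ (inr i) = (i:ℕ) := fun _ => rfl
  apply Finset.card_le_card_of_injOn ψ
  · intro w hw
    rw [Finset.mem_coe, Finset.mem_range]
    cases w with
    | inr i => exact i.isLt
    | inl i =>
      rw [hl]
      have h2 : m % 2 = 0 := Nat.even_iff.mp hme
      have := i.isLt
      split_ifs <;> omega
  · intro a ha b hb heq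
    rw [Finset.coe_filter, Set.mem_setOf_eq] at ha hb
    have hPa := ha.2
    have hPb := hb.2
    cases a with
    | inr i =>
      cases b with
      | inr j =>
        rw [hr, hr] at heq
        exact congrArg inr (Fin.ext heq)
      | inl j =>
        exfalso
        rw [hr, hl] at heq
        by_cases hpj : P (inr j)
        · rw [if_pos hpj] at heq
          have hiU : inl i ∈ U := hF1a i hPa
          by_cases hje : (j:ℕ) % 2 = 0
          · rw [if_pos hje] at heq
            exact hblock j i hPb hpj (Or.inl heq.symm) hiU
          · rw [if_neg hje] at heq
            exact hblock j i hPb hpj (Or.inr (by omega)) hiU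
        · rw [if_neg hpj] at heq
          have : i = j := Fin.ext heq
          subst this
          exact hpj hPa
    | inl i =>
      cases b with
      | inr j =>
        exfalso
        rw [hl, hr] at heq
        by_cases hpi : P (inr i)
        · rw [if_pos hpi] at heq
          have hjU : inl j ∈ U := hF1a j hPb
          by_cases hie : (i:ℕ) % 2 = 0
          · rw [if_pos hie] at heq
            exact hblock i j hPa hpi (Or.inl heq) hjU
          · rw [if_neg hie] at heq
            exact hblock i j hPa hpi (Or.inr (by omega)) hjU
        · rw [if_neg hpi] at heq
          have : i = j := Fin.ext heq
          subst this
          exact hpi hPb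
      | inl j =>
        rw [hl, hl] at heq
        by_cases hpi : P (inr i) <;> by_cases hpj : P (inr j)
        · rw [if_pos hpi, if_pos hpj] at heq
          by_cases hie : (i:ℕ) % 2 = 0 <;> by_cases hje : (j:ℕ) % 2 = 0
          · rw [if_pos hie, if_pos hje] at heq
            exact congrArg inl (Fin.ext (by omega))
          · exfalso; rw [if_pos hie, if_neg hje] at heq; omega
          · exfalso; rw [if_neg hie, if_pos hje] at heq; omega
          · rw [if_neg hie, if_neg hje] at heq
            exact congrArg inl (Fin.ext (by omega))
        · exfalso
          rw [if_pos hpi, if_neg hpj] at heq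
          have hjU : inl j ∈ U := hPb.1
          by_cases hie : (i:ℕ) % 2 = 0
          · rw [if_pos hie] at heq
            exact hblock i j hPa hpi (Or.inl heq) hjU
          · rw [if_neg hie] at heq
            exact hblock i j hPa hpi (Or.inr (by omega)) hjU
        · exfalso
          rw [if_neg hpi, if_pos hpj] at heq
          have hiU : inl i ∈ U := hPa.1
          by_cases hje : (j:ℕ) % 2 = 0
          · rw [if_pos hje] at heq
            exact hblock j i hPb hpj (Or.inl heq.symm) hiU
          · rw [if_neg hje] at heq
            exact hblock j i hPb hpj (Or.inr (by omega)) hiU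
        · rw [if_neg hpi, if_neg hpj] at heq
          exact congrArg inl (Fin.ext heq)

lemma intCount_corona_univ (hm2 : 2 ≤ m) :
    intCount (corona m) (univ : Finset (Fin m ⊕ Fin m)) = m := by
  classical
  set P : (Fin m ⊕ Fin m) → Prop :=
    fun w => w ∈ (univ : Finset (Fin m ⊕ Fin m)) ∧
      Nat.card {v : Fin m ⊕ Fin m // v ∈ (univ : Finset (Fin m ⊕ Fin m)) ∧ (corona m).Adj w v} = 1
    with hP
  have hcount : intCount (corona m) univ = (univ.filter P).card := by
    rw [intCount, natCard_subtype]
  have hPr : ∀ i : Fin m, P (inr i) := by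
    intro i
    refine ⟨mem_univ _, Nat.card_eq_one_iff_unique.mpr ⟨⟨?_⟩, ⟨⟨inl i, mem_univ _, (corona_adj_inr i _).mpr rfl⟩⟩⟩⟩
    rintro ⟨v, -, hv⟩ ⟨v', -, hv'⟩
    rw [corona_adj_inr] at hv hv'
    subst hv; subst hv'; rfl
  have hPl : ∀ i : Fin m, ¬ P (inl i) := by
    intro i hi
    have hsub : Subsingleton {v : Fin m ⊕ Fin m // v ∈ (univ : Finset (Fin m ⊕ Fin m)) ∧ (corona m).Adj (inl i) v} :=
      (Nat.card_eq_one_iff_unique.mp hi.2).1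
    by_cases hlt : (i:ℕ)+1 < m
    · have h1 : (⟨inr i, mem_univ _, (corona_adj_inl_inr i i).mpr rfl⟩ :
          {v : Fin m ⊕ Fin m // v ∈ (univ : Finset (Fin m ⊕ Fin m)) ∧ (corona m).Adj (inl i) v}) =
          ⟨inl ⟨(i:ℕ)+1, hlt⟩, mem_univ _, (corona_adj_inl_inl i _).mpr (Or.inl rfl)⟩ :=
        Subsingleton.elim _ _
      simp at h1
    · have hi1 : 1 ≤ (i:ℕ) := by have := i.isLt; omega
      have hlt' : (i:ℕ)-1 < m := by have := i.isLt; omega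
      have h1 : (⟨inr i, mem_univ _, (corona_adj_inl_inr i i).mpr rfl⟩ :
          {v : Fin m ⊕ Fin m // v ∈ (univ : Finset (Fin m ⊕ Fin m)) ∧ (corona m).Adj (inl i) v}) =
          ⟨inl ⟨(i:ℕ)-1, hlt'⟩, mem_univ _, (corona_adj_inl_inl i _).mpr (Or.inr (by simp; omega))⟩ :=
        Subsingleton.elim _ _
      simp at h1
  rw [hcount]
  have hfe : univ.filter P = univ.image (Sum.inr : Fin m → Fin m ⊕ Fin m) := by
    ext w
    simp only [Finset.mem_filter, Finset.mem_image, mem_univ, true_and]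
    cases w with
    | inl i => exact iff_of_false (hPl i) (by simp)
    | inr i => exact iff_of_true (hPr i) ⟨i, rfl⟩
  rw [hfe, Finset.card_image_of_injective _ Sum.inr_injective, card_univ, Fintype.card_fin]

theorem IPN_corona (m : ℕ) (hm : 0 < m) (hme : Even m) : IPN (corona m) = m := by
  rw [IPN]
  have hm2 : 2 ≤ m := by
    obtain ⟨k, hk⟩ := hme; omega
  refine le_antisymm (Finset.sup_le fun U _ => intCount_corona_le hme U) ?_
  calc m = intCount (corona m) univ := (intCount_corona_univ hm2).symm
    _ ≤ _ := Finset.le_sup (mem_univ _)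

end CoronaProof
end
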